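/- (Croot–Lev–Pach lemma) Let q be a prime power, let P ∈ F_q[x_1,…,x_n] be a polynomial of total degree at most d, and let M be the q^n × q^n matrix over F_q with rows and columns indexed by F_q^n whose entries are M_{x,y} = P(x + y). Then rank(M) ≤ 2·m_{⌊d/2⌋}(q, n), where m_k(q, n) is the number of monomials in x_1,…,x_n in which each variable appears with individual degree at most q−1 and whose total degree is at most k. -/

import Mathlib

/-!
Expand `P(x + y)` into terms `c · xᵃ · yᵇ` with `|a| + |b| ≤ d`, so that in each term `|a| ≤ d/2` or
`|b| ≤ d/2`. On `F_qⁿ` every monomial function equals one with all exponents below `q` and no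
larger total degree, so each term has its `x`-factor or its `y`-factor in the span `U` of the
reduced monomials of degree at most `d/2`. Splitting the sum accordingly writes `M` as a matrix
whose columns lie in `U` plus one whose rows lie in `U`, whence `rank M ≤ 2 dim U`.
-/

open Finset Module

namespace Matrix

variable {K α β ι : Type*} [Field K] [Fintype β]

theorem rank_add_le (A B : Matrix α β K) : (A + B).rank ≤ A.rank + B.rank := by
  rw [rank, rank, rank, mulVecLin_add]
  refine (Submodule.finrank_mono ?_).trans (Submodule.finrank_add_le_finrank_add_finrank _ _)
  rintro _ ⟨x, rfl⟩
  exact Submodule.add_mem_sup (LinearMap.mem_range_self _ x) (LinearMap.mem_range_self _ x)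

variable [Fintype α]

theorem rank_le_finrank_of_forall_col_mem (A : Matrix α β K) (U : Submodule K (α → K))
    (hA : ∀ j, A.col j ∈ U) : A.rank ≤ finrank K U := by
  rw [rank_eq_finrank_span_cols]
  exact Submodule.finrank_mono (Submodule.span_le.2 (Set.range_subset_iff.2 hA))

theorem rank_le_finrank_of_eq_sum {M : Matrix α β K} {s : Finset ι} {u : ι → α → K}
    {v : ι → β → K} (hM : ∀ x y, M x y = ∑ k ∈ s, u k x * v k y) (U : Submodule K (α → K))
    (hu : ∀ k ∈ s, u k ∈ U) : M.rank ≤ finrank K U := by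
  refine M.rank_le_finrank_of_forall_col_mem U fun j => ?_
  have hcol : M.col j = ∑ k ∈ s, v k j • u k := by
    ext i
    simp [hM, mul_comm]
  rw [hcol]
  exact U.sum_mem fun k hk => U.smul_mem _ (hu k hk)

theorem rank_le_finrank_add_finrank_of_eq_sum {M : Matrix α β K} {s : Finset ι}
    {u : ι → α → K} {v : ι → β → K} (hM : ∀ x y, M x y = ∑ k ∈ s, u k x * v k y)
    (U : Submodule K (α → K)) (V : Submodule K (β → K)) (huv : ∀ k ∈ s, u k ∈ U ∨ v k ∈ V) :
    M.rank ≤ finrank K U + finrank K V := by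
  classical
  let A : Matrix α β K := of fun x y => ∑ k ∈ s with u k ∈ U, u k x * v k y
  let B : Matrix α β K := of fun x y => ∑ k ∈ s with u k ∉ U, u k x * v k y
  have hAB : M = A + B := by
    ext x y
    simp [A, B, hM, sum_filter_add_sum_filter_not]
  have hA : A.rank ≤ finrank K U :=
    rank_le_finrank_of_eq_sum (fun _ _ => rfl) U fun k hk => (mem_filter.1 hk).2
  have hB : Bᵀ.rank ≤ finrank K V :=
    rank_le_finrank_of_eq_sum (u := v) (v := u) (fun _ _ => by simp [B, mul_comm]) V
      fun k hk => (huv k (mem_filter.1 hk).1).resolve_left (mem_filter.1 hk).2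
  rw [hAB]
  exact (rank_add_le A B).trans (add_le_add hA (rank_transpose B ▸ hB))

end Matrix

theorem FiniteField.exists_pow_eq_pow_lt_card {K : Type*} [Field K] [Fintype K] (k : ℕ) :
    ∃ j < Fintype.card K, j ≤ k ∧ ∀ a : K, a ^ k = a ^ j := by
  induction k using Nat.strong_induction_on with
  | _ k ih =>
    have hq : 1 < Fintype.card K := Fintype.one_lt_card
    by_cases hk : k < Fintype.card K
    · exact ⟨k, hk, le_rfl, fun _ => rfl⟩
    obtain ⟨j, hjq, hjk, hj⟩ := ih (k - Fintype.card K + 1) (by omega)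
    refine ⟨j, hjq, by omega, fun a => ?_⟩
    calc a ^ k = a ^ (k - Fintype.card K) * a ^ Fintype.card K := by
          rw [← pow_add, Nat.sub_add_cancel (not_lt.1 hk)]
      _ = a ^ (k - Fintype.card K + 1) := by rw [FiniteField.pow_card, pow_succ]
      _ = a ^ j := hj a

section Monomials

variable {σ R : Type*} [Fintype σ]

def monomialFun [CommMonoid R] (k : σ → ℕ) (x : σ → R) : R := ∏ i, x i ^ k i

theorem monomialFun_add [DecidableEq σ] [CommSemiring R] (e : σ → ℕ) (x y : σ → R) :
    monomialFun e (x + y) = ∑ a ∈ Fintype.piFinset fun i => range (e i + 1),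
      (∏ i, ((e i).choose (a i) : R)) * monomialFun a x * monomialFun (e - a) y := by
  simp_rw [monomialFun, Pi.add_apply, add_pow, prod_univ_sum, ← prod_mul_distrib]
  exact sum_congr rfl fun a _ => prod_congr rfl fun i _ => by simp only [Pi.sub_apply]; ring

theorem MvPolynomial.eval_add_eq_sum [DecidableEq σ] [CommSemiring R] (P : MvPolynomial σ R)
    (x y : σ → R) :
    MvPolynomial.eval (x + y) P =
      ∑ k ∈ P.support.sigma fun e => Fintype.piFinset fun i => range (e i + 1),
        (P.coeff k.1 * ∏ i, ((k.1 i).choose (k.2 i) : R)) * monomialFun k.2 x *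
          monomialFun (⇑k.1 - k.2) y := by
  rw [MvPolynomial.eval_eq', sum_sigma]
  refine sum_congr rfl fun e _ => ?_
  rw [← monomialFun, monomialFun_add, mul_sum]
  exact sum_congr rfl fun a _ => by ring

variable (σ) (K : Type*) [Field K] [Fintype K]

def lowDegreeMonomialSpan (m : ℕ) : Submodule K ((σ → K) → K) :=
  Submodule.span K <|
    (fun s : σ → Fin (Fintype.card K) => monomialFun fun i => (s i : ℕ)) ''
      {s | ∑ i, (s i : ℕ) ≤ m}

variable {σ K}

theorem finrank_lowDegreeMonomialSpan_le [DecidableEq σ] (m : ℕ) :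
    finrank K (lowDegreeMonomialSpan σ K m) ≤
      #(univ.filter fun s : σ → Fin (Fintype.card K) => ∑ i, (s i : ℕ) ≤ m) := by
  classical
  have hset : {s : σ → Fin (Fintype.card K) | ∑ i, (s i : ℕ) ≤ m} =
      ↑(univ.filter fun s : σ → Fin (Fintype.card K) => ∑ i, (s i : ℕ) ≤ m) := by
    simp
  rw [lowDegreeMonomialSpan, hset, ← coe_image]
  exact (finrank_span_finset_le_card _).trans card_image_le

theorem monomialFun_mem_lowDegreeMonomialSpan {k : σ → ℕ} {m : ℕ} (hk : ∑ i, k i ≤ m) :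
    monomialFun k ∈ lowDegreeMonomialSpan σ K m := by
  choose j hjq hjk hj using fun i => FiniteField.exists_pow_eq_pow_lt_card (K := K) (k i)
  have hkj : (monomialFun k : (σ → K) → K) = monomialFun fun i => j i := by
    ext x
    exact prod_congr rfl fun i _ => hj i (x i)
  rw [hkj]
  refine Submodule.subset_span ⟨fun i => ⟨j i, hjq i⟩, ?_, rfl⟩
  simpa using (sum_le_sum fun i _ => hjk i).trans hk

theorem monomialFun_mem_lowDegreeMonomialSpan_or {a b : σ → ℕ} {d : ℕ}
    (hab : ∑ i, a i + ∑ i, b i ≤ d) :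
    monomialFun a ∈ lowDegreeMonomialSpan σ K (d / 2) ∨
      monomialFun b ∈ lowDegreeMonomialSpan σ K (d / 2) := by
  by_cases ha : ∑ i, a i ≤ d / 2
  · exact .inl (monomialFun_mem_lowDegreeMonomialSpan ha)
  · exact .inr (monomialFun_mem_lowDegreeMonomialSpan (by omega))

end Monomials

theorem croot_lev_pach_general (q n d : ℕ)
    (F : Type) [Field F] [Fintype F] (hF : Fintype.card F = q)
    (P : MvPolynomial (Fin n) F) (hP : P.totalDegree ≤ d)
    (M : Matrix (Fin n → F) (Fin n → F) F)
    (hM : ∀ x y, M x y = MvPolynomial.eval (x + y) P) :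
    M.rank ≤ 2 * (Finset.univ.filter
      fun e : Fin n → Fin q => ∑ i, (e i : ℕ) ≤ d / 2).card := by
  subst hF
  let U := lowDegreeMonomialSpan (Fin n) F (d / 2)
  have hsplit : ∀ k ∈ P.support.sigma fun e => Fintype.piFinset fun i => range (e i + 1),
      (P.coeff k.1 * ∏ i, ((k.1 i).choose (k.2 i) : F)) • monomialFun k.2 ∈ U ∨
        monomialFun (⇑k.1 - k.2) ∈ U := by
    rintro ⟨e, a⟩ hk
    simp only [mem_sigma, Fintype.mem_piFinset, mem_range, Nat.lt_succ_iff] at hk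
    obtain ⟨he, ha⟩ := hk
    have hdeg : ∑ i, a i + ∑ i, (e - a) i ≤ d := by
      have hsum : ∀ i, a i + (⇑e - a) i = e i := fun i => Nat.add_sub_cancel' (ha i)
      rw [← sum_add_distrib, sum_congr rfl fun i _ => hsum i]
      simpa [Finsupp.sum_fintype] using (MvPolynomial.le_totalDegree he).trans hP
    exact (monomialFun_mem_lowDegreeMonomialSpan_or hdeg).imp_left (U.smul_mem _)
  have hU : finrank F U ≤ _ := finrank_lowDegreeMonomialSpan_le (d / 2)
  calc M.rank ≤ finrank F U + finrank F U :=
        Matrix.rank_le_finrank_add_finrank_of_eq_sum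
          (fun x y => (hM x y).trans (MvPolynomial.eval_add_eq_sum P x y)) U U hsplit
    _ ≤ _ := by omega

/-- **The Croot–Lev–Pach lemma.** Let `F` be a finite field with `q` elements
(`q` a prime power), `P` a polynomial in `n` variables over `F` of total degree at
most `d`, and `M` the `qⁿ × qⁿ` matrix with entries `M x y = P(x + y)`.  Then
`rank M ≤ 2 · m_{⌊d/2⌋}(q, n)`, where `m_k(q, n)` counts the monomials in `n`
variables with individual degrees at most `q - 1` and total degree at most `k`. -/
theorem croot_lev_pach (q n d : ℕ) (hq : IsPrimePow q)
    (F : Type) [Field F] [Fintype F] (hF : Fintype.card F = q)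
    (P : MvPolynomial (Fin n) F) (hP : P.totalDegree ≤ d)
    (M : Matrix (Fin n → F) (Fin n → F) F)
    (hM : ∀ x y, M x y = MvPolynomial.eval (x + y) P) :
    M.rank ≤ 2 * (Finset.univ.filter
      fun e : Fin n → Fin q => ∑ i, (e i : ℕ) ≤ d / 2).card :=
  croot_lev_pach_general q n d F hF P hP M hM
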